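/- arXiv:2303.06764 — 2 statements merged into one kernel-verified Lean document; each statement's English description precedes it below -/
import Mathlib

section
/- Let m, n, r be nonnegative integers with 0 ≤ r < m. Then a_{r,m}(n) = Σ_{j=0}^∞ (mj + r)·p(n − mj − r), where the sum has finitely many nonzero terms since p vanishes on negative arguments. -/
noncomputable section

/-- `partitionCount n` is the number of partitions of `n`. -/
def partitionCount (n : ℕ) : ℕ := Nat.card (Nat.Partition n)

/-- `p` extended to `ℤ`, vanishing on negative arguments. -/
def pZ (x : ℤ) : ℤ := if 0 ≤ x then partitionCount x.toNat else 0

/-- `a r m n` is the sum of all different parts congruent to `r` mod `m`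
in all partitions of `n` (each distinct part value counted once per partition). -/
def a (r m n : ℕ) : ℕ :=
  ∑ l : Nat.Partition n, ∑ d ∈ l.parts.toFinset, if d % m = r then d else 0

/-- `a r m` extended to `ℤ`, vanishing on negative arguments. -/
def aZ (r m : ℕ) (x : ℤ) : ℤ := if 0 ≤ x then a r m x.toNat else 0

/-- `s m n` is the sum of different parts appearing at least `m` times
in all partitions of `n` (each such distinct part value counted once per partition). -/
def s (m n : ℕ) : ℕ :=
  ∑ l : Nat.Partition n, ∑ d ∈ l.parts.toFinset, if m ≤ l.parts.count d then d else 0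

/-- `s m` extended to `ℤ`, vanishing on negative arguments. -/
def sZ (m : ℕ) (x : ℤ) : ℤ := if 0 ≤ x then s m x.toNat else 0

/-- `peo n = p_e(n) - p_o(n)`: partitions with an even number of parts minus
partitions with an odd number of parts. -/
def peo (n : ℕ) : ℤ :=
  (Nat.card {l : Nat.Partition n // Even (Multiset.card l.parts)} : ℤ) -
    (Nat.card {l : Nat.Partition n // Odd (Multiset.card l.parts)} : ℤ)

/-- `peo` extended to `ℤ`, vanishing on negative arguments. -/
def peoZ (x : ℤ) : ℤ := if 0 ≤ x then peo x.toNat else 0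

/-- Number of partitions of `n` into distinct parts, all odd. -/
def qodd (n : ℕ) : ℕ :=
  Nat.card {l : Nat.Partition n // l.parts.Nodup ∧ ∀ d ∈ l.parts, Odd d}

/-- `qodd` extended to `ℤ`, vanishing on negative arguments. -/
def qoddZ (x : ℤ) : ℤ := if 0 ≤ x then qodd x.toNat else 0

/-- Number of partitions of `n` into distinct parts. -/
def q (n : ℕ) : ℕ := Nat.card {l : Nat.Partition n // l.parts.Nodup}

/-- `q(x/2)`, set to `0` whenever `x/2` is not a nonnegative integer. -/
def qHalfZ (x : ℤ) : ℤ := if 0 ≤ x ∧ 2 ∣ x then q (x.toNat / 2) else 0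

/-- The rank of a partition: its largest part minus its number of parts
(the empty partition has rank 0). -/
def rank {n : ℕ} (l : Nat.Partition n) : ℤ :=
  (l.parts.sup : ℤ) - Multiset.card l.parts

/-- Number of partitions of `n` with nonnegative rank. -/
def N (n : ℕ) : ℕ := Nat.card {l : Nat.Partition n // 0 ≤ rank l}

/-- `N` extended to `ℤ`, vanishing on negative arguments. -/
def NZ (x : ℤ) : ℤ := if 0 ≤ x then N x.toNat else 0

/-- Number of partitions of `n` with positive rank. -/
def R (n : ℕ) : ℕ := Nat.card {l : Nat.Partition n // 0 < rank l}

/-- `R` extended to `ℤ`, vanishing on negative arguments. -/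
def RZ (x : ℤ) : ℤ := if 0 ≤ x then R x.toNat else 0

/-- Number of Garden of Eden partitions of `n`, i.e. partitions of rank at most `-2`. -/
def G (n : ℕ) : ℕ := Nat.card {l : Nat.Partition n // rank l ≤ -2}

/-- `G` extended to `ℤ`, vanishing on negative arguments. -/
def GZ (x : ℤ) : ℤ := if 0 ≤ x then G x.toNat else 0

/-- The crank of a partition: the largest part if no part equals 1, and otherwise
the number of parts larger than the multiplicity of 1 minus that multiplicity. -/
def crank {n : ℕ} (l : Nat.Partition n) : ℤ :=
  if Multiset.count 1 l.parts = 0 then (l.parts.sup : ℤ)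
  else (Multiset.card (Multiset.filter (fun d => Multiset.count 1 l.parts < d) l.parts) : ℤ)
    - Multiset.count 1 l.parts

/-- Number of partitions of `n` with nonnegative crank. -/
def C (n : ℕ) : ℕ := Nat.card {l : Nat.Partition n // 0 ≤ crank l}

/-- `C` extended to `ℤ`, vanishing on negative arguments. -/
def CZ (x : ℤ) : ℤ := if 0 ≤ x then C x.toNat else 0

/-- Number of partitions of `n` with positive crank. -/
def D (n : ℕ) : ℕ := Nat.card {l : Nat.Partition n // 0 < crank l}

/-- `D` extended to `ℤ`, vanishing on negative arguments. -/
def DZ (x : ℤ) : ℤ := if 0 ≤ x then D x.toNat else 0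

/-- The minimal excludant of a partition: the least positive integer that is not a part. -/
def mex {n : ℕ} (l : Nat.Partition n) : ℕ := sInf {k : ℕ | 0 < k ∧ k ∉ l.parts}


/-!
Exchanging the two summations, `a_{r,m}(n)` is the sum over part values `d ≡ r (mod m)` of `d`
times the number of partitions of `n` having `d` as a part; removing one copy of `d` identifies
those partitions with the partitions of `n - d`. Writing `d = mj + r` gives the series.
-/

open Finset

lemma pZ_natCast_sub {n d : ℕ} (hdn : d ≤ n) : pZ ((n : ℤ) - d) = partitionCount (n - d) := by
  rw [pZ, if_pos (by omega)]
  congr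
  omega

lemma pZ_of_neg {x : ℤ} (hx : x < 0) : pZ x = 0 :=
  if_neg hx.not_ge

lemma card_filter_mem_parts {n d : ℕ} (hd : 1 ≤ d) (hdn : d ≤ n) :
    #{l : n.Partition | d ∈ l.parts} = partitionCount (n - d) := by
  rw [partitionCount, ← Nat.card_congr (Nat.Partition.partitionWithPartEquiv hd hdn),
    Nat.card_eq_fintype_card, Fintype.card_subtype]

lemma sum_partitions_sum_toFinset_parts {M : Type*} [AddCommMonoid M] (n : ℕ) (f : ℕ → M) :
    ∑ l : n.Partition, ∑ d ∈ l.parts.toFinset, f d =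
      ∑ d ∈ Icc 1 n, partitionCount (n - d) • f d := by
  rw [sum_comm' (t' := Icc 1 n) (s' := fun d => {l : n.Partition | d ∈ l.parts})]
  · refine sum_congr rfl fun d hd => ?_
    obtain ⟨hd1, hdn⟩ := mem_Icc.mp hd
    rw [sum_const, card_filter_mem_parts hd1 hdn]
  · intro l d
    simp only [mem_univ, true_and, mem_filter, Multiset.mem_toFinset, mem_Icc]
    exact iff_self_and.mpr fun hd => ⟨l.parts_pos hd, Nat.Partition.le_of_mem_parts hd⟩

lemma tsum_comp_mul_add {α : Type*} [AddCommMonoid α] [TopologicalSpace α] {m r : ℕ}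
    (h : r < m) (f : ℕ → α) :
    ∑' j, f (m * j + r) = ∑' d, if d % m = r then f d else 0 := by
  have hmod (j : ℕ) : (m * j + r) % m = r := by rw [Nat.mul_add_mod, Nat.mod_eq_of_lt h]
  have hinj : Function.Injective (fun j => m * j + r) := fun i j hij =>
    Nat.eq_of_mul_eq_mul_left (by omega : 0 < m) (by simpa using hij)
  refine Eq.trans ?_ (hinj.tsum_eq fun d hd => ?_)
  · simp only [hmod, if_true]
  · obtain ⟨hdr, -⟩ := not_forall.mp (mt ite_eq_right_iff.mpr hd)
    exact ⟨d / m, by rw [← hdr]; exact Nat.div_add_mod d m⟩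

/-- Merca, Theorem 1.3(i): `a_{r,m}(n) = Σ_{j≥0} (mj+r)·p(n-mj-r)`. -/
theorem a_eq_sum (m n r : ℕ) (h : r < m) :
    (a r m n : ℤ) =
      ∑' j : ℕ, ((m * j + r : ℕ) : ℤ) * pZ ((n : ℤ) - (m * j + r : ℕ)) := by
  rw [tsum_comp_mul_add h (fun d : ℕ => (d : ℤ) * pZ ((n : ℤ) - d)), tsum_eq_sum (s := Icc 1 n),
    a, sum_partitions_sum_toFinset_parts]
  · push_cast
    refine sum_congr rfl fun d hd => ?_
    rw [pZ_natCast_sub (mem_Icc.mp hd).2]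
    split_ifs <;> simp [mul_comm]
  · intro d hd
    rcases Nat.eq_zero_or_pos d with rfl | hd0
    · simp
    · rw [pZ_of_neg (by rw [mem_Icc] at hd; omega)]
      simp
end
end

section
/- For every nonnegative integer n, Σ_{j=0}^∞ (−1)^j · p(n − j(j+1)/2) equals the number of partitions λ of n whose minimal excludant mex(λ) is odd. -/
noncomputable section

/-!
A partition has `mex > j` exactly when it contains each of `1, …, j`; deleting one copy of each
is a bijection onto the partitions of `n - j(j+1)/2`, so `p(n - j(j+1)/2)` counts the partitions
of `n` with `mex > j`. Swapping the two sums, a partition `λ` then contributes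
`∑_{j < mex λ} (-1)^j`, which is `1` if `mex λ` is odd and `0` otherwise.
-/

open Finset

namespace Nat.Partition

variable {n : ℕ} {m : Multiset ℕ}

theorem add_one_notMem_parts (l : n.Partition) : n + 1 ∉ l.parts :=
  fun h => by have := le_of_mem_parts h; omega

theorem sum_le_of_le_parts {l : n.Partition} (h : m ≤ l.parts) : m.sum ≤ n := by
  rw [← l.parts_sum, ← tsub_add_cancel_of_le h, Multiset.sum_add]
  exact Nat.le_add_left _ _

def subtypeLePartsEquiv (hm : ∀ i ∈ m, 0 < i) (h : m.sum ≤ n) :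
    {l : n.Partition // m ≤ l.parts} ≃ (n - m.sum).Partition where
  toFun l :=
    { parts := l.1.parts - m
      parts_pos := fun hi => l.1.parts_pos (Multiset.mem_of_le tsub_le_self hi)
      parts_sum := by
        have := congrArg Multiset.sum (tsub_add_cancel_of_le l.2)
        rw [Multiset.sum_add, l.1.parts_sum] at this
        omega }
  invFun l :=
    ⟨{ parts := l.parts + m
       parts_pos := fun hi => (Multiset.mem_add.mp hi).elim l.parts_pos (hm _)
       parts_sum := by rw [Multiset.sum_add, l.parts_sum]; omega },
      Multiset.le_add_left _ _⟩
  left_inv l := Subtype.ext (Nat.Partition.ext (tsub_add_cancel_of_le l.2))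
  right_inv l := Nat.Partition.ext (add_tsub_cancel_right _ _)

theorem card_subtype_le_parts (hm : ∀ i ∈ m, 0 < i) :
    (Nat.card {l : n.Partition // m ≤ l.parts} : ℤ) = pZ (n - m.sum) := by
  by_cases h : m.sum ≤ n
  · rw [Nat.card_congr (subtypeLePartsEquiv hm h), pZ, if_pos (by omega), partitionCount]
    congr
    omega
  · have : IsEmpty {l : n.Partition // m ≤ l.parts} := ⟨fun l => h (sum_le_of_le_parts l.2)⟩
    rw [Nat.card_of_isEmpty, pZ, if_neg (by omega)]
    rfl

end Nat.Partition

section Mex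

variable {n : ℕ} {l : n.Partition} {k : ℕ}

theorem mex_le_of_notMem (hk : 0 < k) (h : k ∉ l.parts) : mex l ≤ k :=
  Nat.sInf_le (show k ∈ {k | 0 < k ∧ k ∉ l.parts} from ⟨hk, h⟩)

theorem mex_le (l : n.Partition) : mex l ≤ n + 1 :=
  mex_le_of_notMem n.succ_pos l.add_one_notMem_parts

theorem mex_pos_and_notMem (l : n.Partition) : 0 < mex l ∧ mex l ∉ l.parts :=
  Nat.sInf_mem (s := {k | 0 < k ∧ k ∉ l.parts}) ⟨n + 1, n.succ_pos, l.add_one_notMem_parts⟩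

theorem lt_mex_iff : k < mex l ↔ (Icc 1 k).val ≤ l.parts := by
  rw [Multiset.le_iff_subset (Icc 1 k).nodup]
  constructor
  · intro h i hi
    rw [Finset.mem_val, Finset.mem_Icc] at hi
    by_contra hil
    have := mex_le_of_notMem hi.1 hil
    omega
  · intro h
    by_contra! hk
    obtain ⟨hpos, hnotMem⟩ := mex_pos_and_notMem l
    exact hnotMem (h (Finset.mem_Icc.mpr ⟨hpos, hk⟩))

end Mex

theorem sum_Icc_one_id (j : ℕ) : ∑ i ∈ Icc 1 j, i = j * (j + 1) / 2 := by
  have h := Finset.sum_range_id (j + 1)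
  rw [Finset.range_eq_Ico, Finset.sum_eq_sum_Ico_succ_bot j.succ_pos] at h
  simpa [Ico_add_one_right_eq_Icc, mul_comm] using h

theorem card_lt_mex (n j : ℕ) :
    (Nat.card {l : n.Partition // j < mex l} : ℤ) = pZ (n - (j * (j + 1) / 2 : ℕ)) := by
  simp_rw [lt_mex_iff]
  rw [Nat.Partition.card_subtype_le_parts fun i hi => (Finset.mem_Icc.mp hi).1,
    Finset.sum_val, ← sum_Icc_one_id]
  rfl

/-- `Σ_{j≥0} (-1)^j p(n - j(j+1)/2)` equals the number of partitions of `n`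
with odd minimal excludant. -/
theorem alt_sum_eq_odd_mex (n : ℕ) :
    (∑' j : ℕ, (-1 : ℤ) ^ j * pZ ((n : ℤ) - (j * (j + 1) / 2 : ℕ))) =
      (Nat.card {l : Nat.Partition n // Odd (mex l)} : ℤ) := by
  classical
  simp_rw [← card_lt_mex, Nat.card_eq_fintype_card, Fintype.card_subtype]
  have hvanish : ∀ j ∉ range (n + 1), (-1 : ℤ) ^ j * #{l : n.Partition | j < mex l} = 0 := by
    intro j hj
    rw [mem_range, not_lt] at hj
    rw [filter_false_of_mem fun l _ => by have := mex_le l; omega, card_empty, Nat.cast_zero,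
      mul_zero]
  rw [tsum_eq_sum hvanish]
  calc ∑ j ∈ range (n + 1), (-1 : ℤ) ^ j * #{l | j < mex l}
      = ∑ j ∈ range (n + 1), ∑ l with j < mex l, (-1 : ℤ) ^ j := by
        simp only [sum_const, nsmul_eq_mul, mul_comm]
    _ = ∑ l : n.Partition, ∑ j ∈ range (mex l), (-1 : ℤ) ^ j :=
        sum_comm' fun j l => by
          have := mex_le l
          simp only [mem_range, mem_filter, mem_univ, true_and, and_true]
          omega
    _ = #{l | Odd (mex l)} := by
        simp [neg_one_geom_sum, ← Nat.not_odd_iff_even]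
end
end
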